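/- arXiv:1704.00310 — 2 statements merged into one kernel-verified Lean document; each statement's English description precedes it below -/
import Mathlib

section
/- For a probability measure μ on a measurable space W and a measurable function f : W → ℝ with e^{-f} integrable, the Gibbs variational formula holds: -log ∫ e^{-f} dμ = inf over all probability measures γ ≪ μ with finite relative entropy of ( ∫ f dγ + H(γ|μ) ), and the infimum is attained at dν = (∫ e^{-f} dμ)^{-1} e^{-f} dμ provided H(ν|μ) < ∞. -/
open MeasureTheory

/-- Relative entropy `H(γ|μ) = ∫ log (dγ/dμ) dγ` (as a real integral). -/
noncomputable def relEntropy {W : Type*} [MeasurableSpace W] (γ μ : Measure W) : ℝ :=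
  ∫ x, Real.log (γ.rnDeriv μ x).toReal ∂γ

/-!
The Gibbs measure `ν = μ.tilted (-f)`, with density `e^{-f} / ∫ e^{-f} dμ`, satisfies
`log (dγ/dν) = log (dγ/dμ) + f + log ∫ e^{-f} dμ` for every `γ ≪ μ`. Integrating against `γ`,
`∫ f dγ + H(γ|μ) = -log ∫ e^{-f} dμ + KL(γ‖ν)`, and Gibbs' inequality `KL(γ‖ν) ≥ 0`, with
`KL(ν‖ν) = 0`, gives both the lower bound and its attainment at `ν`.
-/

open Real InformationTheory

theorem integral_add_relEntropy_eq_neg_log_add_klDiv_tilted {W : Type*} [MeasurableSpace W]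
    {μ γ : Measure W} [SigmaFinite μ] [NeZero μ] [IsProbabilityMeasure γ] {f : W → ℝ}
    (hint : Integrable (fun x => exp (-f x)) μ) (hγμ : γ ≪ μ) (hγf : Integrable f γ)
    (hγent : Integrable (llr γ μ) γ) :
    ∫ x, f x ∂γ + relEntropy γ μ =
      -log (∫ x, exp (-f x) ∂μ) + (klDiv γ (μ.tilted fun x => -f x)).toReal := by
  have := isProbabilityMeasure_tilted hint
  rw [toReal_klDiv_of_measure_eq (hγμ.trans (absolutelyContinuous_tilted hint)) (by simp),
    integral_llr_tilted_right (f := fun x => -f x) hγμ hγf.neg hint hγent, integral_neg,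
    relEntropy, ← llr_def]
  ring

theorem gibbs_variational_formula_general {W : Type*} [MeasurableSpace W] (μ : Measure W)
    [IsProbabilityMeasure μ] (f : W → ℝ)
    (hint : Integrable (fun x => Real.exp (-f x)) μ)
    (ν : Measure W)
    (hν : ν = μ.withDensity
      (fun x => ENNReal.ofReal ((∫ y, Real.exp (-f y) ∂μ)⁻¹ * Real.exp (-f x))))
    (hνent : Integrable (fun x => Real.log (ν.rnDeriv μ x).toReal) ν)
    (hνf : Integrable f ν) :
    IsLeast
      {r : ℝ | ∃ γ : Measure W, IsProbabilityMeasure γ ∧ γ ≪ μ ∧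
        Integrable f γ ∧ Integrable (fun x => Real.log (γ.rnDeriv μ x).toReal) γ ∧
        r = ∫ x, f x ∂γ + relEntropy γ μ}
      (-Real.log (∫ x, Real.exp (-f x) ∂μ)) := by
  obtain rfl : ν = μ.tilted fun x => -f x := by
    simp_rw [hν, Measure.tilted, div_eq_inv_mul]
  have := isProbabilityMeasure_tilted hint
  refine ⟨⟨_, this, tilted_absolutelyContinuous μ _, hνf, hνent, ?_⟩, ?_⟩
  · rw [integral_add_relEntropy_eq_neg_log_add_klDiv_tilted hint
      (tilted_absolutelyContinuous μ _) hνf hνent, klDiv_self]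
    simp
  · rintro _ ⟨γ, hγ, hγμ, hγf, hγent, rfl⟩
    rw [integral_add_relEntropy_eq_neg_log_add_klDiv_tilted hint hγμ hγf hγent]
    exact le_add_of_nonneg_right ENNReal.toReal_nonneg

/-- Gibbs variational formula: `-log ∫ e^{-f} dμ` is the least value of
`∫ f dγ + H(γ|μ)` over probability measures `γ ≪ μ` with finite relative entropy,
the minimum being attained at `dν = (∫ e^{-f}dμ)⁻¹ e^{-f} dμ` when `H(ν|μ) < ∞`. -/
theorem gibbs_variational_formula {W : Type*} [MeasurableSpace W] (μ : Measure W)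
    [IsProbabilityMeasure μ] (f : W → ℝ) (hf : Measurable f)
    (hint : Integrable (fun x => Real.exp (-f x)) μ)
    (hpos : 0 < ∫ x, Real.exp (-f x) ∂μ)
    (ν : Measure W)
    (hν : ν = μ.withDensity
      (fun x => ENNReal.ofReal ((∫ y, Real.exp (-f y) ∂μ)⁻¹ * Real.exp (-f x))))
    (hνent : Integrable (fun x => Real.log (ν.rnDeriv μ x).toReal) ν)
    (hνf : Integrable f ν) :
    IsLeast
      {r : ℝ | ∃ γ : Measure W, IsProbabilityMeasure γ ∧ γ ≪ μ ∧
        Integrable f γ ∧ Integrable (fun x => Real.log (γ.rnDeriv μ x).toReal) γ ∧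
        r = ∫ x, f x ∂γ + relEntropy γ μ}
      (-Real.log (∫ x, Real.exp (-f x) ∂μ)) :=
  gibbs_variational_formula_general μ f hint ν hν hνent hνf
end

section
/- Let μ be a probability measure, f measurable with ν defined by dν = c e^{-f} dμ a probability measure (c the normalizing constant). Then for any measurable map U with U_*ν ≪ ν, the relative entropy satisfies H(U_*ν | ν) = ∫ (f ∘ U − f − log Λ_u) dν, where Λ_u satisfies ( (dU_*ν/dν) e^{-f} ) ∘ U · Λ_u = e^{-f} ν-a.s. -/
/-!
After the change of variables `∫ g d(U_*ν) = ∫ g ∘ U dν`, the identity is pointwise: taking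
logarithms in the Jacobian equation `l_U(U x) e^{-f(U x)} Λ(x) = e^{-f(x)}` gives
`log l_U(U x) = f(U x) - f(x) - log Λ(x)`; the equation also forces `l_U(U x) > 0`, so no
junk value of `Real.log` intervenes.
-/

open MeasureTheory

theorem Real.log_eq_of_mul_exp_neg_mul_eq_exp_neg {l a b J : ℝ} (hJ : 0 < J)
    (h : l * Real.exp (-a) * J = Real.exp (-b)) :
    Real.log l = a - b - Real.log J := by
  have hl : l ≠ 0 := by
    rintro rfl
    simp only [zero_mul] at h
    exact (Real.exp_pos _).ne h
  have hlog := congrArg Real.log h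
  rw [Real.log_mul (mul_ne_zero hl (Real.exp_pos _).ne') hJ.ne', Real.log_mul hl
    (Real.exp_pos _).ne', Real.log_exp, Real.log_exp] at hlog
  linarith

theorem entropy_formula_perturbation_general {W : Type*} [MeasurableSpace W]
    (f : W → ℝ)
    (ν : Measure W)
    (U : W → W) (hU : Measurable U)
    (Λ : W → ℝ) (hΛpos : ∀ᵐ x ∂ν, 0 < Λ x)
    (hjac : ∀ᵐ x ∂ν,
      ((ν.map U).rnDeriv ν (U x)).toReal * Real.exp (-f (U x)) * Λ x
        = Real.exp (-f x)) :
    ∫ x, Real.log ((ν.map U).rnDeriv ν x).toReal ∂(ν.map U)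
      = ∫ x, (f (U x) - f x - Real.log (Λ x)) ∂ν := by
  rw [integral_map hU.aemeasurable
    (Measure.measurable_rnDeriv _ _).ennreal_toReal.log.aestronglyMeasurable]
  refine integral_congr_ae ?_
  filter_upwards [hjac, hΛpos] with x hx hΛx
  exact Real.log_eq_of_mul_exp_neg_mul_eq_exp_neg hΛx hx

/-- for `dν = c e^{-f} dμ` a probability measure and `U` a measurable
map with `U_*ν ≪ ν`, writing `l_U = d(U_*ν)/dν` and `Λ_u` the Jacobian with
`(l_U e^{-f}) ∘ U · Λ_u = e^{-f}` ν-a.s., the relative entropy satisfies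
`H(U_*ν | ν) = ∫ (f∘U − f − log Λ_u) dν`. -/
theorem entropy_formula_perturbation {W : Type*} [MeasurableSpace W]
    (μ : Measure W) [IsProbabilityMeasure μ]
    (f : W → ℝ) (hf : Measurable f) (c : ℝ) (hc : 0 < c)
    (ν : Measure W)
    (hν : ν = μ.withDensity (fun x => ENNReal.ofReal (c * Real.exp (-f x))))
    (hνprob : IsProbabilityMeasure ν)
    (U : W → W) (hU : Measurable U)
    (hac : ν.map U ≪ ν)
    (Λ : W → ℝ) (hΛ : Measurable Λ) (hΛpos : ∀ᵐ x ∂ν, 0 < Λ x)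
    (hjac : ∀ᵐ x ∂ν,
      ((ν.map U).rnDeriv ν (U x)).toReal * Real.exp (-f (U x)) * Λ x
        = Real.exp (-f x))
    (hint1 : Integrable (fun x => Real.log ((ν.map U).rnDeriv ν x).toReal) (ν.map U))
    (hint2 : Integrable (fun x => f (U x) - f x - Real.log (Λ x)) ν) :
    ∫ x, Real.log ((ν.map U).rnDeriv ν x).toReal ∂(ν.map U)
      = ∫ x, (f (U x) - f x - Real.log (Λ x)) ∂ν :=
  entropy_formula_perturbation_general f ν U hU Λ hΛpos hjac
end
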